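/- Let n ≥ 1 and σ ∈ B_n. Then the numbers f_i(σ) satisfy: (1) f_1(σ) ≥ f_2(σ) ≥ ⋯ ≥ f_n(σ); and (2) if 1 ≤ i < j ≤ n and f_i(σ) = f_j(σ), then σ(i) < σ(i+1) < ⋯ < σ(j) and all of the numbers σ(i), σ(i+1), …, σ(j) have the same sign. -/

import Mathlib

open MvPolynomial

/-- The hyperoctahedral group `Bₙ`, realized as the subgroup of permutations of `ℤ`
that commute with negation and fix every integer of absolute value greater than `n`.
Such a permutation restricts to a bijection `σ` of `{-n,…,-1,1,…,n}` with
`σ(-k) = -σ(k)`, and every such bijection arises from a unique element. -/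
def HOct (n : ℕ) : Subgroup (Equiv.Perm ℤ) where
  carrier := {σ | (∀ k : ℤ, σ (-k) = -(σ k)) ∧ ∀ k : ℤ, (n : ℤ) < |k| → σ k = k}
  one_mem' := by
    refine ⟨fun k => rfl, fun k _ => rfl⟩
  mul_mem' := by
    rintro σ τ ⟨hσ1, hσ2⟩ ⟨hτ1, hτ2⟩
    refine ⟨fun k => ?_, fun k hk => ?_⟩
    · simp [Equiv.Perm.mul_apply, hτ1, hσ1]
    · simp [Equiv.Perm.mul_apply, hτ2 k hk, hσ2 k hk]
  inv_mem' := by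
    rintro σ ⟨h1, h2⟩
    refine ⟨fun k => ?_, fun k hk => ?_⟩
    · apply σ.injective
      rw [show σ (σ⁻¹ (-k)) = -k from σ.apply_symm_apply (-k), h1,
        show σ (σ⁻¹ k) = k from σ.apply_symm_apply k]
    · have h := h2 k hk
      nth_rewrite 1 [← h]
      rw [show σ⁻¹ (σ k) = k from σ.symm_apply_apply k]

/-- The descent set `Des(σ) = {1 ≤ i ≤ n-1 : σ(i) > σ(i+1)}`. -/
def DesB (n : ℕ) (σ : Equiv.Perm ℤ) : Finset ℕ :=
  (Finset.Ico 1 n).filter fun i => σ ((i : ℤ) + 1) < σ (i : ℤ)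

/-- `d_i(σ) = #{j ∈ Des(σ) : j ≥ i}`. -/
def dB (n : ℕ) (σ : Equiv.Perm ℤ) (i : ℕ) : ℕ :=
  ((DesB n σ).filter fun j => i ≤ j).card

/-- `ε_i(σ)`: `1` if `σ(i) < 0`, `0` otherwise. -/
def epsB (σ : Equiv.Perm ℤ) (i : ℕ) : ℕ := if σ (i : ℤ) < 0 then 1 else 0

/-- `f_i(σ) = 2 d_i(σ) + ε_i(σ)`. -/
def fB (n : ℕ) (σ : Equiv.Perm ℤ) (i : ℕ) : ℕ := 2 * dB n σ i + epsB σ i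

/-- The sign `σ(k)/|σ(k)|` as a rational number. -/
def sgnQ (σ : Equiv.Perm ℤ) (k : ℤ) : ℚ := if σ k < 0 then -1 else 1

/-- For `i : Fin n` (representing the index `i+1 ∈ {1,…,n}`), the element of `Fin n`
representing `|σ(i+1)| ∈ {1,…,n}`. -/
def sIdx {n : ℕ} (σ : Equiv.Perm ℤ) (i : Fin n) : Fin n :=
  ⟨((σ ((i : ℕ) + 1 : ℤ)).natAbs - 1) % n, Nat.mod_lt _ i.pos⟩

/-- The diagonal action of a signed permutation on `ℚ[x₁,…,xₙ,y₁,…,yₙ]`: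
`x_k ↦ (σ(k)/|σ(k)|)·x_{|σ(k)|}` and `y_k ↦ (σ(k)/|σ(k)|)·y_{|σ(k)|}`.
Here `Sum.inl i` is the variable `x_{i+1}` and `Sum.inr i` is `y_{i+1}`. -/
noncomputable def actXY (n : ℕ) (σ : Equiv.Perm ℤ) :
    MvPolynomial (Fin n ⊕ Fin n) ℚ →ₐ[ℚ] MvPolynomial (Fin n ⊕ Fin n) ℚ :=
  aeval (Sum.elim
    (fun i => C (sgnQ σ ((i : ℕ) + 1 : ℤ)) * X (Sum.inl (sIdx σ i)))
    (fun i => C (sgnQ σ ((i : ℕ) + 1 : ℤ)) * X (Sum.inr (sIdx σ i))))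

/-- Action of a signed permutation on the `x`-variables only. -/
noncomputable def actX (n : ℕ) (σ : Equiv.Perm ℤ) :
    MvPolynomial (Fin n ⊕ Fin n) ℚ →ₐ[ℚ] MvPolynomial (Fin n ⊕ Fin n) ℚ :=
  aeval (Sum.elim
    (fun i => C (sgnQ σ ((i : ℕ) + 1 : ℤ)) * X (Sum.inl (sIdx σ i)))
    (fun i => X (Sum.inr i)))

/-- Action of a signed permutation on the `y`-variables only. -/
noncomputable def actY (n : ℕ) (σ : Equiv.Perm ℤ) :
    MvPolynomial (Fin n ⊕ Fin n) ℚ →ₐ[ℚ] MvPolynomial (Fin n ⊕ Fin n) ℚ :=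
  aeval (Sum.elim
    (fun i => X (Sum.inl i))
    (fun i => C (sgnQ σ ((i : ℕ) + 1 : ℤ)) * X (Sum.inr (sIdx σ i))))

/-- The averaging operator `ρ(f) = (1/|Bₙ|) ∑_{σ ∈ Bₙ} σ·f`. -/
noncomputable def rho (n : ℕ) (f : MvPolynomial (Fin n ⊕ Fin n) ℚ) :
    MvPolynomial (Fin n ⊕ Fin n) ℚ :=
  (Nat.card ↥(HOct n) : ℚ)⁻¹ • ∑ᶠ σ : ↥(HOct n), actXY n (σ : Equiv.Perm ℤ) f

/-- The diagonal signed descent monomial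
`c_σ = ∏_{i=1}^n x_i^{f_i(σ⁻¹)} y_i^{f_{|σ⁻¹(i)|}(σ)}`. -/
noncomputable def cMon (n : ℕ) (σ : Equiv.Perm ℤ) : MvPolynomial (Fin n ⊕ Fin n) ℚ :=
  ∏ i : Fin n,
    (X (Sum.inl i) ^ fB n σ⁻¹ ((i : ℕ) + 1) *
      X (Sum.inr i) ^ fB n σ ((σ⁻¹ ((i : ℕ) + 1 : ℤ)).natAbs))

/-- The monomial `x^p y^q`. -/
noncomputable def monXY (n : ℕ) (p q : Fin n → ℕ) : MvPolynomial (Fin n ⊕ Fin n) ℚ :=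
  (∏ i : Fin n, X (Sum.inl i) ^ p i) * ∏ i : Fin n, X (Sum.inr i) ^ q i

/-- The monomial `x^p y^q` is ordered (belongs to `𝒪ₙ`). -/
def OrderedMon (n : ℕ) (p q : Fin n → ℕ) : Prop :=
  (∀ k, Even (p k + q k)) ∧ Antitone p ∧
  (∀ (i : Fin n) (h : (i : ℕ) + 1 < n),
    p i = p ⟨(i : ℕ) + 1, h⟩ → Even (p i) → q ⟨(i : ℕ) + 1, h⟩ ≤ q i) ∧
  (∀ (i : Fin n) (h : (i : ℕ) + 1 < n),
    p i = p ⟨(i : ℕ) + 1, h⟩ → Odd (p i) → q i ≤ q ⟨(i : ℕ) + 1, h⟩)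

/-- `σ` is the signed index permutation of a monomial with `y`-exponent sequence `q`:
(1) `q_{|σ(1)|} ≥ ⋯ ≥ q_{|σ(n)|}`; (2) ties `q_{|σ(i)|} = q_{|σ(j)|}` (`i < j`) force
`σ(i) < σ(i+1) < ⋯ < σ(j)`; (3) `q_{|σ(i)|}` is even iff `σ(i) > 0`. -/
def IsSignedIndexPerm (n : ℕ) (q : Fin n → ℕ) (σ : Equiv.Perm ℤ) : Prop :=
  σ ∈ HOct n ∧
  Antitone (fun i : Fin n => q (sIdx σ i)) ∧
  (∀ i j : Fin n, i < j → q (sIdx σ i) = q (sIdx σ j) →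
    ∀ k l : Fin n, i ≤ k → k < l → l ≤ j →
      σ ((k : ℕ) + 1 : ℤ) < σ ((l : ℕ) + 1 : ℤ)) ∧
  (∀ i : Fin n, Even (q (sIdx σ i)) ↔ 0 < σ ((i : ℕ) + 1 : ℤ))

/-- `𝔰(q) = q` if `q` is even, `-q` if `q` is odd. -/
def sFun (q : ℕ) : ℤ := if Even q then (q : ℤ) else -(q : ℤ)

/-- The decreasing rearrangement `𝔬(q)` of a sequence `q`. -/
def oArr {n : ℕ} (q : Fin n → ℕ) : Fin n → ℕ := fun i => q (Tuple.sort q i.rev)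

/-- Strict lexicographic comparison of sequences. -/
def LexLT {n : ℕ} {α : Type*} [LT α] (a b : Fin n → α) : Prop :=
  ∃ i, (∀ j, j < i → a j = b j) ∧ a i < b i

/-- The monomial `x^{p'} y^{q'}` strictly precedes `x^p y^q` in the total order `≼` on
ordered monomials: either `𝔬(x^{p'}y^{q'}) <_ℓ 𝔬(x^p y^q)` lexicographically, or the
`𝔬`-data agree and `(p', 𝔰(q')) <_ℓ (p, 𝔰(q))` lexicographically. -/
def MonPrec {n : ℕ} (p' q' p q : Fin n → ℕ) : Prop :=
  LexLT (oArr p') (oArr p) ∨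
  (oArr p' = oArr p ∧ LexLT (oArr q') (oArr q)) ∨
  (oArr p' = oArr p ∧ oArr q' = oArr q ∧
    (LexLT p' p ∨ (p' = p ∧ LexLT (fun i => sFun (q' i)) (fun i => sFun (q i)))))

/-- The monomial symmetric polynomial `m_{2ν}(x) = ∑_{[α] ∈ Σₙ/Σₙ(ν)} x^{2α(ν)}`,
i.e. the sum of all distinct monomials `x^{2w}` with `w` a rearrangement of `ν`. -/
noncomputable def mSymX (n : ℕ) (ν : Fin n → ℕ) : MvPolynomial (Fin n ⊕ Fin n) ℚ :=
  ∑ w ∈ Finset.image (fun α : Equiv.Perm (Fin n) => ν ∘ α) Finset.univ,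
    ∏ i : Fin n, X (Sum.inl i) ^ (2 * w i)

/-- The monomial symmetric polynomial `m_{2μ}(y)`. -/
noncomputable def mSymY (n : ℕ) (μ : Fin n → ℕ) : MvPolynomial (Fin n ⊕ Fin n) ℚ :=
  ∑ w ∈ Finset.image (fun α : Equiv.Perm (Fin n) => μ ∘ α) Finset.univ,
    ∏ i : Fin n, X (Sum.inr i) ^ (2 * w i)

/-- The action of a signed permutation on `ℚ[x₁,…,xₙ]`:
`x_k ↦ (σ(k)/|σ(k)|)·x_{|σ(k)|}`. Here the variable `i : Fin n` is `x_{i+1}`. -/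
noncomputable def actB (n : ℕ) (σ : Equiv.Perm ℤ) :
    MvPolynomial (Fin n) ℚ →ₐ[ℚ] MvPolynomial (Fin n) ℚ :=
  aeval fun i => C (sgnQ σ ((i : ℕ) + 1 : ℤ)) * X (sIdx σ i)

/-- The signed descent monomial `b_σ = ∏_{i=1}^n x_i^{f_{|σ⁻¹(i)|}(σ)}`. -/
noncomputable def bMon (n : ℕ) (σ : Equiv.Perm ℤ) : MvPolynomial (Fin n) ℚ :=
  ∏ i : Fin n, X i ^ fB n σ ((σ⁻¹ ((i : ℕ) + 1 : ℤ)).natAbs)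

/- `d_i` drops by one exactly at the descents and `ε_i ∈ {0,1}`, so `f_i` can only
grow from `i+1` to `i` unless `σ(i) < σ(i+1)`, in which case `ε_{i+1} ≤ ε_i` since a negative
`σ(i+1)` forces a negative `σ(i)`. Hence `f` is weakly decreasing, and `f_i = f_j` makes `f`
constant on `[i, j]`; then `d = f / 2` is constant there (no descents) and `ε = f % 2` too
(constant sign). -/

theorem apply_zero_of_mem_HOct {n : ℕ} {σ : Equiv.Perm ℤ} (hσ : σ ∈ HOct n) :
    σ 0 = 0 := by
  have h := hσ.1 0
  rw [neg_zero] at h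
  omega

theorem apply_ne_zero_of_mem_HOct {n : ℕ} {σ : Equiv.Perm ℤ} (hσ : σ ∈ HOct n) {k : ℤ}
    (hk : k ≠ 0) : σ k ≠ 0 := by
  rw [← apply_zero_of_mem_HOct hσ, σ.injective.ne_iff]
  exact hk

theorem AntitoneOn.eq_left_of_eq {α β : Type*} [Preorder α] [PartialOrder β] {f : α → β}
    {s : Set α} (hf : AntitoneOn f s) {a b c : α} (ha : a ∈ s) (hb : b ∈ s) (hc : c ∈ s)
    (hac : a ≤ c) (hcb : c ≤ b) (hab : f a = f b) : f c = f a :=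
  le_antisymm (hf ha hc hac) (hab ▸ hf hc hb hcb)

section

variable (n : ℕ) (σ : Equiv.Perm ℤ)

theorem mem_DesB_iff {k : ℕ} (hk1 : 1 ≤ k) (hkn : k < n) :
    k ∈ DesB n σ ↔ σ ((k : ℤ) + 1) < σ k := by
  simp [DesB, hk1, hkn]

theorem dB_eq_dB_succ_add (k : ℕ) :
    dB n σ k = dB n σ (k + 1) + if k ∈ DesB n σ then 1 else 0 := by
  have hsplit : ∀ j : ℕ, (if k ≤ j then 1 else 0) = (if k + 1 ≤ j then 1 else 0) +
      if k = j then 1 else 0 := by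
    intro j
    split_ifs <;> omega
  simp only [dB, Finset.card_filter]
  rw [Finset.sum_congr rfl fun j _ => hsplit j, Finset.sum_add_distrib, Finset.sum_ite_eq]

theorem epsB_le_one (k : ℕ) : epsB σ k ≤ 1 := by
  unfold epsB
  split_ifs <;> simp

theorem fB_div_two (k : ℕ) : fB n σ k / 2 = dB n σ k := by
  have := epsB_le_one σ k
  unfold fB
  omega

theorem fB_mod_two (k : ℕ) : fB n σ k % 2 = epsB σ k := by
  have := epsB_le_one σ k
  unfold fB
  omega

theorem lt_apply_succ_of_notMem_DesB {k : ℕ} (hk1 : 1 ≤ k) (hkn : k < n)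
    (hk : k ∉ DesB n σ) : σ k < σ ((k : ℤ) + 1) := by
  rw [mem_DesB_iff n σ hk1 hkn, not_lt] at hk
  exact lt_of_le_of_ne hk (σ.injective.ne (by omega))

theorem fB_succ_le {k : ℕ} (hk1 : 1 ≤ k) (hkn : k < n) : fB n σ (k + 1) ≤ fB n σ k := by
  have hd := dB_eq_dB_succ_add n σ k
  unfold fB
  by_cases hk : k ∈ DesB n σ
  · have := epsB_le_one σ (k + 1)
    rw [if_pos hk] at hd
    omega
  · have hlt := lt_apply_succ_of_notMem_DesB n σ hk1 hkn hk
    rw [if_neg hk] at hd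
    suffices epsB σ (k + 1) ≤ epsB σ k by omega
    unfold epsB
    push_cast
    split_ifs <;> omega

theorem antitoneOn_fB : AntitoneOn (fB n σ) (Set.Icc 1 n) :=
  antitoneOn_of_add_one_le Set.ordConnected_Icc fun _ _ hk hk1 => fB_succ_le n σ hk.1 hk1.2

theorem notMem_DesB_of_fB_eq {k : ℕ} (h : fB n σ k = fB n σ (k + 1)) : k ∉ DesB n σ := by
  have hd := dB_eq_dB_succ_add n σ k
  rw [← fB_div_two, ← fB_div_two, h] at hd
  simpa using hd

end

theorem pos_iff_pos_of_epsB_eq {n : ℕ} {σ : Equiv.Perm ℤ} (hσ : σ ∈ HOct n) {k i : ℕ}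
    (hk : k ≠ 0) (hi : i ≠ 0) (h : epsB σ k = epsB σ i) : 0 < σ k ↔ 0 < σ i := by
  have hk0 := apply_ne_zero_of_mem_HOct hσ (Int.natCast_ne_zero.mpr hk)
  have hi0 := apply_ne_zero_of_mem_HOct hσ (Int.natCast_ne_zero.mpr hi)
  unfold epsB at h
  split_ifs at h <;> omega

theorem fB_properties_general (n : ℕ) (σ : Equiv.Perm ℤ) (hσ : σ ∈ HOct n) :
    (∀ i j : ℕ, 1 ≤ i → i ≤ j → j ≤ n → fB n σ j ≤ fB n σ i) ∧
    (∀ i j : ℕ, 1 ≤ i → i < j → j ≤ n → fB n σ i = fB n σ j →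
      (∀ k l : ℕ, i ≤ k → k < l → l ≤ j → σ (k : ℤ) < σ (l : ℤ)) ∧
      (∀ k : ℕ, i ≤ k → k ≤ j → (0 < σ (k : ℤ) ↔ 0 < σ (i : ℤ)))) := by
  have hanti := antitoneOn_fB n σ
  refine ⟨fun i j hi hij hjn => hanti ⟨hi, hij.trans hjn⟩ ⟨hi.trans hij, hjn⟩ hij, ?_⟩
  intro i j hi hij hjn heq
  have hconst : ∀ k, i ≤ k → k ≤ j → fB n σ k = fB n σ i := fun k hik hkj =>
    hanti.eq_left_of_eq ⟨hi, by omega⟩ ⟨by omega, hjn⟩ ⟨by omega, by omega⟩ hik hkj heq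
  refine ⟨fun k l hik hkl hlj => ?_, fun k hik hkj => ?_⟩
  · have hmono : StrictMonoOn (fun k : ℕ => σ k) (Set.Icc i j) := by
      refine strictMonoOn_of_lt_add_one Set.ordConnected_Icc fun m _ hm hm1 => ?_
      have hdes : m ∉ DesB n σ := notMem_DesB_of_fB_eq n σ <| by
        rw [hconst m hm.1 hm.2, hconst (m + 1) (hm.1.trans m.le_succ) hm1.2]
      push_cast
      exact lt_apply_succ_of_notMem_DesB n σ (hi.trans hm.1)
        (Nat.lt_of_succ_le (hm1.2.trans hjn)) hdes
    exact hmono ⟨hik, hkl.le.trans hlj⟩ ⟨hik.trans hkl.le, hlj⟩ hkl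
  · refine pos_iff_pos_of_epsB_eq hσ (by omega) (by omega) ?_
    rw [← fB_mod_two n, ← fB_mod_two n, hconst k hik hkj]

/-- Properties of the numbers `f_i(σ)` for `σ ∈ Bₙ`:
(1) `f_1(σ) ≥ f_2(σ) ≥ ⋯ ≥ f_n(σ)`; (2) if `i < j` and `f_i(σ) = f_j(σ)` then
`σ(i) < σ(i+1) < ⋯ < σ(j)` and all of `σ(i), …, σ(j)` have the same sign. -/
theorem fB_properties (n : ℕ) (hn : 1 ≤ n) (σ : Equiv.Perm ℤ) (hσ : σ ∈ HOct n) :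
    (∀ i j : ℕ, 1 ≤ i → i ≤ j → j ≤ n → fB n σ j ≤ fB n σ i) ∧
    (∀ i j : ℕ, 1 ≤ i → i < j → j ≤ n → fB n σ i = fB n σ j →
      (∀ k l : ℕ, i ≤ k → k < l → l ≤ j → σ (k : ℤ) < σ (l : ℤ)) ∧
      (∀ k : ℕ, i ≤ k → k ≤ j → (0 < σ (k : ℤ) ↔ 0 < σ (i : ℤ)))) :=
  fB_properties_general n σ hσ
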